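/- arXiv:math/0607035 — 2 statements merged into one kernel-verified Lean document; each statement's English description precedes it below -/
import Mathlib

section
/- Let A = R/I be a graded Artinian level algebra with h-vector (h_0, h_1, …, h_s) and socle degree s. Suppose h_{d−1} > h_d for some d ≥ r_1(A). Then (a) h_{d−1} > h_d > h_{d+1} > … > h_{s−1} > h_s > 0, and (b) h_{t−1} − h_t ≤ (n−1)(h_t − h_{t+1}) for all d ≤ t ≤ s. -/
open MvPolynomial Module Submodule

noncomputable section

/-- The degree of a monomial exponent vector. -/
def monDeg {n : ℕ} (μ : Fin n →₀ ℕ) : ℕ := ∑ i, μ i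

variable (k : Type*) [Field k] {n : ℕ}

/-- A property `P` of tuples holds *generically* if it holds on a nonempty
Zariski-open subset of parameter space. -/
def Generic {ι : Type*} (P : (ι → k) → Prop) : Prop :=
  ∃ p : MvPolynomial ι k, p ≠ 0 ∧ ∀ c : ι → k, MvPolynomial.eval c p ≠ 0 → P c

/-- The linear form with coefficient vector `c`. -/
def linForm (c : Fin n → k) : MvPolynomial (Fin n) k := ∑ i, MvPolynomial.C (c i) * X i

/-- `dim_k I_d`, the dimension of the degree-`d` piece of a homogeneous ideal. -/
def idim (I : Ideal (MvPolynomial (Fin n) k)) (d : ℕ) : ℕ :=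
  finrank k ↥(Submodule.restrictScalars k I ⊓ homogeneousSubmodule (Fin n) k d)

/-- The Hilbert function of `A = R/I`. -/
def hilb (I : Ideal (MvPolynomial (Fin n) k)) (d : ℕ) : ℕ :=
  finrank k ↥(homogeneousSubmodule (Fin n) k d) - idim k I d

/-- The reduction number `r₁(R/I)`: the least `ℓ` such that for a general linear
form `L`, `(R/(I+(L)))_{ℓ+1} = 0`. -/
def redNum (I : Ideal (MvPolynomial (Fin n) k)) : ℕ :=
  sInf {ℓ : ℕ | Generic k fun c : Fin n → k =>
    hilb k (I ⊔ Ideal.span {linForm k c}) (ℓ + 1) = 0}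

/-- The degree-`d` part of the preimage in `R` of the socle of `A = R/I`:
homogeneous elements of degree `d` killed by every variable modulo `I`. -/
def socPiece (I : Ideal (MvPolynomial (Fin n) k)) (d : ℕ) :
    Submodule k (MvPolynomial (Fin n) k) :=
  homogeneousSubmodule (Fin n) k d ⊓
    ⨅ i : Fin n, Submodule.comap (LinearMap.mulLeft k (X i)) (Submodule.restrictScalars k I)

/-- `dim_k soc(R/I)_d`. -/
def socDim (I : Ideal (MvPolynomial (Fin n) k)) (d : ℕ) : ℕ :=
  finrank k ↥(socPiece k I d) - idim k I d

/-- `R/I` is level with socle degree `s` : the socle is concentrated in degree `s`. -/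
def IsLevel (I : Ideal (MvPolynomial (Fin n) k)) (s : ℕ) : Prop :=
  ∀ d : ℕ, d ≠ s → ∀ f ∈ socPiece k I d, f ∈ I

/-- `dim_k (0 :_{R/I} L)_d` where `L` is the linear form with coefficients `c`. -/
def annDim (I : Ideal (MvPolynomial (Fin n) k)) (c : Fin n → k) (d : ℕ) : ℕ :=
  finrank k ↥(homogeneousSubmodule (Fin n) k d ⊓
      Submodule.comap (LinearMap.mulLeft k (linForm k c)) (Submodule.restrictScalars k I))
    - idim k I d

/-- `dim_k ((J : x)/J)_d` for `x` a variable (or any polynomial). -/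
def colonDim (J : Ideal (MvPolynomial (Fin n) k)) (x : MvPolynomial (Fin n) k) (d : ℕ) : ℕ :=
  finrank k ↥(homogeneousSubmodule (Fin n) k d ⊓
      Submodule.comap (LinearMap.mulLeft k x) (Submodule.restrictScalars k J))
    - idim k J d

/-- `R/I` has the Weak Lefschetz Property: there is a linear form `L` such that
each multiplication map `(R/I)_i → (R/I)_{i+1}` is injective or surjective. -/
def HasWLP (I : Ideal (MvPolynomial (Fin n) k)) : Prop :=
  ∃ c : Fin n → k, ∀ i : ℕ,
    (∀ f ∈ homogeneousSubmodule (Fin n) k i, linForm k c * f ∈ I → f ∈ I) ∨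
    hilb k (I ⊔ Ideal.span {linForm k c}) (i + 1) = 0

/-! ### Binomial expansions -/

/-- The largest `m` with `C(m,i) ≤ h` (junk value if unbounded). -/
def msup (h i : ℕ) : ℕ := sSup {m : ℕ | Nat.choose m i ≤ h}

/-- Auxiliary greedy binomial-expansion sum. -/
def expandAux (g : ℕ → ℕ → ℕ) : ℕ → ℕ → ℕ
  | 0, _ => 0
  | i + 1, h =>
    if h = 0 then 0
    else g (msup h (i + 1)) (i + 1) +
      expandAux g i (h - Nat.choose (msup h (i + 1)) (i + 1))

/-- `(h_{(i)})⁻ = C(m_i−1,i)+⋯+C(m_j−1,j)` from the `i`-binomial expansion of `h`. -/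
def lowerDec (h i : ℕ) : ℕ := expandAux (fun m t => Nat.choose (m - 1) t) i h

/-- Macaulay growth `h^{⟨i⟩} = C(m_i+1,i+1)+⋯+C(m_j+1,j+1)`. -/
def macGrow (h i : ℕ) : ℕ := expandAux (fun m t => Nat.choose (m + 1) (t + 1)) i h

/-- A sequence is an O-sequence if it starts at 1 and satisfies Macaulay's bound. -/
def IsOSeq (h : ℕ → ℕ) : Prop :=
  h 0 = 1 ∧ ∀ d : ℕ, 1 ≤ d → h (d + 1) ≤ macGrow (h d) d

/-! ### Graded Betti numbers via the Koszul complex -/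

/-- The degree-`z` piece of a homogeneous ideal, indexed by `ℤ` (zero in negative degrees). -/
def pieceZ (I : Ideal (MvPolynomial (Fin n) k)) (z : ℤ) :
    Submodule k (MvPolynomial (Fin n) k) :=
  if 0 ≤ z then Submodule.restrictScalars k I ⊓ homogeneousSubmodule (Fin n) k z.toNat else ⊥

theorem mulX_mem_pieceZ (I : Ideal (MvPolynomial (Fin n) k)) (i : Fin n) {z : ℤ}
    {x : MvPolynomial (Fin n) k} (hx : x ∈ pieceZ k I z) : X i * x ∈ pieceZ k I (z + 1) := by
  by_cases hz : 0 ≤ z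
  · have hz1 : 0 ≤ z + 1 := by omega
    simp only [pieceZ, if_pos hz, Submodule.mem_inf, Submodule.restrictScalars_mem,
      mem_homogeneousSubmodule] at hx
    simp only [pieceZ, if_pos hz1, Submodule.mem_inf, Submodule.restrictScalars_mem,
      mem_homogeneousSubmodule]
    refine ⟨I.mul_mem_left _ hx.1, ?_⟩
    have := (MvPolynomial.isHomogeneous_X k i).mul hx.2
    have hnat : (z + 1).toNat = 1 + z.toNat := by omega
    rwa [hnat]
  · simp only [pieceZ, if_neg hz, Submodule.mem_bot] at hx
    subst hx
    rw [mul_zero]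
    exact Submodule.zero_mem _

/-- Multiplication by the variable `X i`, raising the degree by one. -/
def mulXmap (I : Ideal (MvPolynomial (Fin n) k)) (i : Fin n) {z w : ℤ} (hw : w = z + 1) :
    ↥(pieceZ k I z) →ₗ[k] ↥(pieceZ k I w) :=
  hw ▸ (LinearMap.mulLeft k (X i)).restrict (fun x hx => mulX_mem_pieceZ k I i hx)

/-- Index type for the Koszul complex: `q`-element subsets of the variables. -/
abbrev kIdx (n q : ℕ) : Type := {S : Finset (Fin n) // S.card = q}

/-- The degree-`j` strand of the `q`-th term of the Koszul complex of `I`. -/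
abbrev kSpace (I : Ideal (MvPolynomial (Fin n) k)) (q : ℕ) (j : ℤ) : Type _ :=
  ∀ _ : kIdx n q, ↥(pieceZ k I (j - q))

/-- The Koszul differential `K_{q+1} → K_q` (degree-`j` strand). -/
def koszulD (I : Ideal (MvPolynomial (Fin n) k)) (q : ℕ) (j : ℤ) :
    kSpace k I (q + 1) j →ₗ[k] kSpace k I q j :=
  LinearMap.pi fun T =>
    ∑ i ∈ (Finset.univ \ T.1).attach,
      ((-1 : k) ^ (T.1.filter (fun l => l < i.1)).card) •
        ((mulXmap k I i.1 (show (j - (q : ℤ)) = (j - ((q : ℕ) + 1 : ℕ)) + 1 by push_cast; ring)).comp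
          (LinearMap.proj (⟨insert i.1 T.1, by
            have hi : i.1 ∉ T.1 := by
              have := i.2
              simp only [Finset.mem_sdiff, Finset.mem_univ, true_and] at this
              exact this
            rw [Finset.card_insert_of_notMem hi, T.2]⟩ : kIdx n (q + 1))))

/-- The graded Betti number `β_{q,j}(I) = dim_k Tor_q^R(I,k)_j`, computed as the
dimension of the homology of the degree-`j` strand of the Koszul complex of `I`. -/
def betti (I : Ideal (MvPolynomial (Fin n) k)) (q j : ℕ) : ℕ :=
  match q with
  | 0 => finrank k (kSpace k I 0 (j : ℤ)) - finrank k ↥(LinearMap.range (koszulD k I 0 (j : ℤ)))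
  | p + 1 =>
    finrank k ↥(LinearMap.ker (koszulD k I p (j : ℤ))) -
      finrank k ↥(LinearMap.range (koszulD k I (p + 1) (j : ℤ)))

/-- `J` is `m`-regular: `β_{p,j}(J) = 0` whenever `j > m + p`. -/
def IsMReg (m : ℕ) (J : Ideal (MvPolynomial (Fin n) k)) : Prop :=
  ∀ p j : ℕ, m + p < j → betti k J p j = 0

/-! ### Monomial ideals, initial ideals, Gin and lex-segment ideals -/

/-- The degree reverse lexicographic order (as a strict relation) on exponent
vectors, for `x_1 > x_2 > ⋯ > x_n`. -/
def rlLT {n : ℕ} (μ ν : Fin n →₀ ℕ) : Prop :=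
  monDeg μ < monDeg ν ∨
    (monDeg μ = monDeg ν ∧ ∃ i : Fin n, ν i < μ i ∧ ∀ l : Fin n, i < l → μ l = ν l)

/-- The lexicographic order (as a strict relation) on exponent vectors,
for `x_1 > x_2 > ⋯ > x_n`. -/
def lexLT {n : ℕ} (μ ν : Fin n →₀ ℕ) : Prop :=
  ∃ i : Fin n, μ i < ν i ∧ ∀ l : Fin n, l < i → μ l = ν l

/-- `μ` is the leading (degrevlex-largest) monomial of `f`. -/
def IsLeadMon (f : MvPolynomial (Fin n) k) (μ : Fin n →₀ ℕ) : Prop :=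
  f ≠ 0 ∧ μ ∈ f.support ∧ ∀ ν ∈ f.support, ν ≠ μ → rlLT ν μ

/-- The initial ideal of `I` with respect to the degree reverse lexicographic order. -/
def initialIdeal (I : Ideal (MvPolynomial (Fin n) k)) : Ideal (MvPolynomial (Fin n) k) :=
  Ideal.span {x | ∃ f ∈ I, ∃ μ, IsLeadMon k f μ ∧ x = MvPolynomial.monomial μ (1 : k)}

/-- The linear change of coordinates determined by the matrix `g`. -/
def changeCoord (g : Fin n → Fin n → k) :
    MvPolynomial (Fin n) k →ₐ[k] MvPolynomial (Fin n) k :=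
  MvPolynomial.aeval fun i => ∑ j, MvPolynomial.C (g i j) * X j

/-- `J` is the generic initial ideal (revlex) of `I`: for a generic change of
coordinates `g`, the initial ideal of `g·I` equals `J`. -/
def IsGin (I J : Ideal (MvPolynomial (Fin n) k)) : Prop :=
  ∃ p : MvPolynomial (Fin n × Fin n) k, p ≠ 0 ∧
    ∀ g : Fin n → Fin n → k, MvPolynomial.eval (fun ij => g ij.1 ij.2) p ≠ 0 →
      initialIdeal k (Ideal.map (changeCoord k g) I) = J

/-- The lex-segment ideal associated to `I`: in each degree it is spanned by the
`dim_k I_d` lexicographically largest monomials. -/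
def lexIdeal (I : Ideal (MvPolynomial (Fin n) k)) : Ideal (MvPolynomial (Fin n) k) :=
  Ideal.span {x | ∃ μ : Fin n →₀ ℕ,
    Nat.card {ν : Fin n →₀ ℕ // monDeg ν = monDeg μ ∧ (ν = μ ∨ lexLT μ ν)} ≤ idim k I (monDeg μ)
    ∧ x = MvPolynomial.monomial μ (1 : k)}

/-- A monomial ideal: with every polynomial it contains all of its monomials. -/
def IsMonomialIdeal (J : Ideal (MvPolynomial (Fin n) k)) : Prop :=
  ∀ f ∈ J, ∀ μ ∈ f.support, MvPolynomial.monomial μ (1 : k) ∈ J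

/-- A stable monomial ideal: for every monomial `w ∈ J` and `j < m(w)`,
`x_j·w/x_{m(w)} ∈ J`, where `m(w)` is the largest variable dividing `w`. -/
def IsStable (J : Ideal (MvPolynomial (Fin n) k)) : Prop :=
  IsMonomialIdeal k J ∧
    ∀ (μ : Fin n →₀ ℕ) (i j : Fin n), MvPolynomial.monomial μ (1 : k) ∈ J → μ i ≠ 0 →
      (∀ l : Fin n, i < l → μ l = 0) → j < i →
      MvPolynomial.monomial (μ + Finsupp.single j 1 - Finsupp.single i 1) (1 : k) ∈ J

/-- A lex-segment ideal: a monomial ideal whose monomials in each degree form an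
upward-closed set in the lexicographic order. -/
def IsLexSegmentIdeal (J : Ideal (MvPolynomial (Fin n) k)) : Prop :=
  IsMonomialIdeal k J ∧
    ∀ μ ν : Fin n →₀ ℕ, monDeg μ = monDeg ν → MvPolynomial.monomial μ (1 : k) ∈ J →
      lexLT μ ν → MvPolynomial.monomial ν (1 : k) ∈ J

/-- `μ` is a minimal monomial generator of the monomial ideal `J`. -/
def IsMinGen (J : Ideal (MvPolynomial (Fin n) k)) (μ : Fin n →₀ ℕ) : Prop :=
  MvPolynomial.monomial μ (1 : k) ∈ J ∧
    ∀ i : Fin n, μ i ≠ 0 → MvPolynomial.monomial (μ - Finsupp.single i 1) (1 : k) ∉ J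

/-- The ideal `(I_{≤ t})` generated by the homogeneous elements of `I` of degree `≤ t`. -/
def trunc (I : Ideal (MvPolynomial (Fin n) k)) (t : ℕ) : Ideal (MvPolynomial (Fin n) k) :=
  Ideal.span {f | f ∈ I ∧ ∃ e ≤ t, f.IsHomogeneous e}

end

noncomputable section

variable (k : Type*) [Field k] {n : ℕ}

/-- `I` is a homogeneous ideal: it contains all homogeneous components of its elements. -/
def IsHomogIdeal (I : Ideal (MvPolynomial (Fin n) k)) : Prop :=
  ∀ f ∈ I, ∀ e : ℕ, MvPolynomial.homogeneousComponent e f ∈ I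

end

/-!
Let `L` be a general linear form and `A = R/I`. By the choice of `r₁`, multiplication by `L`
maps `A_u` onto `A_{u+1}` for `u ≥ r₁`, so there `h_u - h_{u+1} = dim (0 :_A L)_u`. Levelness
makes injectivity of `·L` propagate downwards below `s`: if `L f ∈ I`, then `L (x_i f) ∈ I` for
all `i`, so injectivity one degree up puts `f` in the socle. Thus `h_{t-1} ≤ h_t` for some
`d < t ≤ s` (where `·L` is onto, hence bijective) would make `·L` injective in degree `d - 1`,
against `h_{d-1} > h_d`. For (b), when the `i₀`-th coefficient of `L` is nonzero,
`f ↦ (x_i f)_{i ≠ i₀}` embeds `(0 :_A L)_u` into `n - 1` copies of `(0 :_A L)_{u+1}` for `u < s`: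
`L f = 0` and `x_i f = 0` for `i ≠ i₀` force `x_{i₀} f = 0`, so `f` lies in the socle.
-/

noncomputable section GradedPieces

variable {k : Type*} [Field k] {n : ℕ}

instance (t : ℕ) : FiniteDimensional k (homogeneousSubmodule (Fin n) k t) :=
  Module.Finite.iff_fg.mpr (homogeneousSubmodule_fg (Fin n) k t)

variable (I : Ideal (MvPolynomial (Fin n) k))

def idealPart (t : ℕ) : Submodule k (homogeneousSubmodule (Fin n) k t) :=
  (Submodule.restrictScalars k I).comap (homogeneousSubmodule (Fin n) k t).subtype

/-- `(R/I)_t`, modelled as the quotient `R_t ⧸ I_t`. -/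
abbrev QuotPart (t : ℕ) : Type _ := homogeneousSubmodule (Fin n) k t ⧸ idealPart I t

variable {I}

theorem QuotPart.mk_eq_zero_iff {t : ℕ} {f : homogeneousSubmodule (Fin n) k t} :
    (Submodule.Quotient.mk f : QuotPart I t) = 0 ↔ (f : MvPolynomial (Fin n) k) ∈ I :=
  Submodule.Quotient.mk_eq_zero _

variable (I) in
theorem finrank_quotPart (t : ℕ) : finrank k (QuotPart I t) = hilb k I t := by
  have hsum : finrank k (QuotPart I t) + finrank k (idealPart I t) =
      finrank k (homogeneousSubmodule (Fin n) k t) :=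
    Submodule.finrank_quotient_add_finrank _
  have hpart : finrank k (idealPart I t) = idim k I t := by
    rw [idealPart, ← inf_top_eq (Submodule.comap _ _), ← Submodule.comap_subtype_self,
      ← Submodule.comap_inf]
    exact LinearEquiv.finrank_eq (Submodule.comapSubtypeEquivOfLe inf_le_right)
  rw [hilb]
  omega

theorem hilb_eq_zero_iff {m : ℕ} :
    hilb k I m = 0 ↔ homogeneousSubmodule (Fin n) k m ≤ Submodule.restrictScalars k I := by
  rw [← finrank_quotPart, Module.finrank_zero_iff, Submodule.Quotient.subsingleton_iff,
    idealPart, Submodule.comap_subtype_eq_top]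

theorem hilb_eq_zero_of_le {m m' : ℕ} (hm : hilb k I m = 0) (hmm' : m ≤ m') :
    hilb k I m' = 0 := by
  induction m', hmm' using Nat.le_induction with
  | base => exact hm
  | succ m' _ ih =>
    rw [hilb_eq_zero_iff, ← homogeneousSubmodule_one_pow, pow_succ, homogeneousSubmodule_one_pow]
    exact Submodule.mul_le.mpr fun f hf w _ => I.mul_mem_right w (hilb_eq_zero_iff.mp ih hf)

theorem pos_of_hilb_ne_zero {t : ℕ} (ht : 0 < t) (h : hilb k I t ≠ 0) : 0 < n := by
  refine Nat.pos_of_ne_zero fun hn => h (hilb_eq_zero_iff.mpr ?_)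
  subst hn
  rw [← homogeneousSubmodule_one_pow, homogeneousSubmodule_one_eq_span_X, Set.range_eq_empty,
    Submodule.span_empty, Submodule.bot_pow ht.ne']
  exact bot_le

end GradedPieces

noncomputable section Multiplication

variable {k : Type*} [Field k] {n : ℕ} {I : Ideal (MvPolynomial (Fin n) k)}
  {w : MvPolynomial (Fin n) k}

variable (I) in
def mulPart (hw : w.IsHomogeneous 1) (t : ℕ) : QuotPart I t →ₗ[k] QuotPart I (t + 1) :=
  Submodule.mapQ _ _
    ((LinearMap.mulLeft k w).restrict fun f hf => by rw [add_comm]; exact hw.mul hf)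
    fun f hf => I.mul_mem_left w hf

theorem mulPart_mk_eq_zero_iff (hw : w.IsHomogeneous 1) {t : ℕ}
    {f : homogeneousSubmodule (Fin n) k t} :
    mulPart I hw t (Submodule.Quotient.mk f) = 0 ↔ w * (f : MvPolynomial (Fin n) k) ∈ I :=
  QuotPart.mk_eq_zero_iff

theorem mulPart_comp_comm {w' : MvPolynomial (Fin n) k} (hw : w.IsHomogeneous 1)
    (hw' : w'.IsHomogeneous 1) (t : ℕ) :
    (mulPart I hw (t + 1)).comp (mulPart I hw' t) =
      (mulPart I hw' (t + 1)).comp (mulPart I hw t) := by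
  refine Submodule.linearMap_qext _ (LinearMap.ext fun f => ?_)
  exact congrArg Submodule.Quotient.mk (Subtype.ext (mul_left_comm w w' f))

theorem mulPart_injective_iff (hw : w.IsHomogeneous 1) {t : ℕ} :
    Function.Injective (mulPart I hw t) ↔
      ∀ f ∈ homogeneousSubmodule (Fin n) k t, w * f ∈ I → f ∈ I := by
  rw [← LinearMap.ker_eq_bot, Submodule.eq_bot_iff]
  constructor
  · intro h f hf hwf
    exact QuotPart.mk_eq_zero_iff.mp (h (Submodule.Quotient.mk ⟨f, hf⟩)
      ((mulPart_mk_eq_zero_iff hw).mpr hwf))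
  · intro h x hx
    obtain ⟨f, rfl⟩ := Submodule.Quotient.mk_surjective _ x
    exact QuotPart.mk_eq_zero_iff.mpr (h f f.2 ((mulPart_mk_eq_zero_iff hw).mp hx))

theorem mulPart_injective_of_surjective (hw : w.IsHomogeneous 1) {t : ℕ}
    (hsurj : Function.Surjective (mulPart I hw t)) (hle : hilb k I t ≤ hilb k I (t + 1)) :
    Function.Injective (mulPart I hw t) := by
  rwa [LinearMap.injective_iff_surjective_of_finrank_eq_finrank]
  have := LinearMap.finrank_range_le (mulPart I hw t)
  rw [LinearMap.range_eq_top.mpr hsurj, finrank_top, finrank_quotPart, finrank_quotPart] at this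
  rw [finrank_quotPart, finrank_quotPart]
  omega

theorem hilb_le_hilb_succ_of_injective (hw : w.IsHomogeneous 1) {t : ℕ}
    (hinj : Function.Injective (mulPart I hw t)) : hilb k I t ≤ hilb k I (t + 1) := by
  simpa only [finrank_quotPart] using LinearMap.finrank_le_finrank_of_injective hinj

theorem hilb_le_hilb_succ_add_finrank_ker (hw : w.IsHomogeneous 1) (t : ℕ) :
    hilb k I t ≤ hilb k I (t + 1) + finrank k (LinearMap.ker (mulPart I hw t)) := by
  have hrank := (mulPart I hw t).finrank_range_add_finrank_ker
  have hrange := Submodule.finrank_le (LinearMap.range (mulPart I hw t))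
  rw [finrank_quotPart] at hrank hrange
  omega

theorem hilb_succ_add_finrank_ker_of_surjective (hw : w.IsHomogeneous 1) {t : ℕ}
    (hsurj : Function.Surjective (mulPart I hw t)) :
    hilb k I (t + 1) + finrank k (LinearMap.ker (mulPart I hw t)) = hilb k I t := by
  have hrank := (mulPart I hw t).finrank_range_add_finrank_ker
  rwa [LinearMap.range_eq_top.mpr hsurj, finrank_top, finrank_quotPart,
    finrank_quotPart] at hrank

end Multiplication

section Surjectivity

variable {k : Type*} [Field k] {n : ℕ} {I : Ideal (MvPolynomial (Fin n) k)}
  {w : MvPolynomial (Fin n) k}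

attribute [local instance] MvPolynomial.gradedAlgebra in
theorem homogeneousComponent_succ_mul (hw : w.IsHomogeneous 1) (f : MvPolynomial (Fin n) k)
    (m : ℕ) : homogeneousComponent (m + 1) (f * w) = homogeneousComponent m f * w := by
  rw [← decomposition.decompose'_apply, ← decomposition.decompose'_apply]
  exact DirectSum.coe_decompose_mul_add_of_right_mem (homogeneousSubmodule (Fin n) k) hw

theorem mulPart_surjective (hI : IsHomogIdeal k I) (hw : w.IsHomogeneous 1) {m : ℕ}
    (hm : hilb k (I ⊔ Ideal.span {w}) (m + 1) = 0) : Function.Surjective (mulPart I hw m) := by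
  intro y
  obtain ⟨v, rfl⟩ := Submodule.Quotient.mk_surjective _ y
  obtain ⟨a, ha, b, hb, hab⟩ := Submodule.mem_sup.mp (hilb_eq_zero_iff.mp hm v.2)
  obtain ⟨f, rfl⟩ := Ideal.mem_span_singleton'.mp hb
  have hv : (v : MvPolynomial (Fin n) k) =
      homogeneousComponent (m + 1) a + homogeneousComponent m f * w := by
    rw [← homogeneousComponent_succ_mul hw, ← map_add, hab,
      homogeneousComponent_of_mem v.2, if_pos rfl]
  refine ⟨Submodule.Quotient.mk ⟨homogeneousComponent m f, homogeneousComponent_mem m f⟩, ?_⟩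
  refine (Submodule.Quotient.eq _).mpr ?_
  show w * homogeneousComponent m f - v ∈ I
  rw [hv, mul_comm, sub_add_cancel_right]
  exact I.neg_mem (hI a ha (m + 1))

end Surjectivity

section Level

variable {k : Type*} [Field k] {n : ℕ} {I : Ideal (MvPolynomial (Fin n) k)} {s : ℕ}
  {w : MvPolynomial (Fin n) k}

theorem IsLevel.mem_of_forall_X_mul_mem (hlev : IsLevel k I s) {m : ℕ} (hm : m ≠ s)
    {f : MvPolynomial (Fin n) k} (hf : f.IsHomogeneous m) (h : ∀ i, X i * f ∈ I) : f ∈ I :=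
  hlev m hm f ⟨hf, Submodule.mem_iInf _ |>.mpr h⟩

theorem IsLevel.mulPart_injective_of_succ (hlev : IsLevel k I s) (hw : w.IsHomogeneous 1)
    {m : ℕ} (hm : m ≠ s) (h : Function.Injective (mulPart I hw (m + 1))) :
    Function.Injective (mulPart I hw m) := by
  rw [mulPart_injective_iff] at h ⊢
  refine fun f hf hwf => hlev.mem_of_forall_X_mul_mem hm hf fun i => h _ ?_ ?_
  · rw [add_comm]
    exact (isHomogeneous_X k i).mul hf
  · rw [mul_left_comm]
    exact I.mul_mem_left _ hwf

theorem IsLevel.mulPart_injective_of_le (hlev : IsLevel k I s) (hw : w.IsHomogeneous 1)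
    {m t : ℕ} (hmt : m ≤ t) (hts : t ≤ s) (h : Function.Injective (mulPart I hw t)) :
    Function.Injective (mulPart I hw m) := by
  induction t, hmt using Nat.le_induction with
  | base => exact h
  | succ t _ ih => exact ih (by omega) (hlev.mulPart_injective_of_succ hw (by omega) h)

end Level

noncomputable section LinearForm

variable {k : Type*} [Field k] {n : ℕ} {I : Ideal (MvPolynomial (Fin n) k)} {s : ℕ}

theorem isHomogeneous_linForm (c : Fin n → k) : (linForm k c).IsHomogeneous 1 :=
  IsHomogeneous.sum _ _ _ fun i _ => isHomogeneous_C_mul_X (c i) i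

theorem X_mul_mem_of_linForm_mul_mem {c : Fin n → k} {i₀ : Fin n} (hc : c i₀ ≠ 0)
    {f : MvPolynomial (Fin n) k} (hL : linForm k c * f ∈ I) (h : ∀ i ≠ i₀, X i * f ∈ I) :
    X i₀ * f ∈ I := by
  have hsplit : linForm k c * f =
      C (c i₀) * (X i₀ * f) + ∑ i ∈ Finset.univ.erase i₀, C (c i) * (X i * f) := by
    simp only [linForm, Finset.sum_mul, mul_assoc]
    exact (Finset.add_sum_erase _ _ (Finset.mem_univ i₀)).symm
  have hrest : ∑ i ∈ Finset.univ.erase i₀, C (c i) * (X i * f) ∈ I :=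
    I.sum_mem fun i hi => I.mul_mem_left _ (h i (Finset.ne_of_mem_erase hi))
  rw [← I.unit_mul_mem_iff_mem (hc.isUnit.map C), ← I.add_mem_iff_left hrest, ← hsplit]
  exact hL

variable (I) in
def mulXKer {L : MvPolynomial (Fin n) k} (hL : L.IsHomogeneous 1) (i : Fin n) (u : ℕ) :
    LinearMap.ker (mulPart I hL u) →ₗ[k] LinearMap.ker (mulPart I hL (u + 1)) :=
  (mulPart I (isHomogeneous_X k i) u).restrict fun x hx => by
    rw [LinearMap.mem_ker] at hx ⊢
    rw [← LinearMap.comp_apply, mulPart_comp_comm, LinearMap.comp_apply, hx, map_zero]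

theorem IsLevel.finrank_ker_mulPart_le (hlev : IsLevel k I s) {c : Fin n → k} {i₀ : Fin n}
    (hc : c i₀ ≠ 0) {u : ℕ} (hu : u ≠ s) :
    finrank k (LinearMap.ker (mulPart I (isHomogeneous_linForm c) u)) ≤
      (n - 1) * finrank k (LinearMap.ker (mulPart I (isHomogeneous_linForm c) (u + 1))) := by
  set hL := isHomogeneous_linForm c
  have hinj : Function.Injective
      (LinearMap.pi fun i : {i // i ≠ i₀} => mulXKer I hL i u) := by
    rw [← LinearMap.ker_eq_bot, Submodule.eq_bot_iff]
    rintro ⟨x, hx⟩ hx0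
    obtain ⟨f, rfl⟩ := Submodule.Quotient.mk_surjective _ x
    have hXf : ∀ i ≠ i₀, X i * (f : MvPolynomial (Fin n) k) ∈ I := fun i hi =>
      (mulPart_mk_eq_zero_iff (isHomogeneous_X k i)).mp
        (congrArg Subtype.val (congrFun hx0 ⟨i, hi⟩))
    have hLf := (mulPart_mk_eq_zero_iff hL).mp hx
    refine Subtype.ext (QuotPart.mk_eq_zero_iff.mpr (hlev.mem_of_forall_X_mul_mem hu f.2 ?_))
    intro i
    obtain rfl | hi := eq_or_ne i i₀
    · exact X_mul_mem_of_linForm_mul_mem hc hLf hXf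
    · exact hXf i hi
  calc _ ≤ finrank k ({i // i ≠ i₀} → LinearMap.ker (mulPart I hL (u + 1))) :=
        LinearMap.finrank_le_finrank_of_injective hinj
    _ = _ := by
      rw [Module.finrank_pi_fintype, Finset.sum_const, Finset.card_univ, smul_eq_mul,
        Fintype.card_subtype_compl, Fintype.card_subtype_eq, Fintype.card_fin]

end LinearForm

section HilbertFunction

variable {k : Type*} [Field k] {n : ℕ} {I : Ideal (MvPolynomial (Fin n) k)} {s : ℕ}

theorem IsLevel.hilb_lt_hilb_pred (hI : IsHomogIdeal k I) (hlev : IsLevel k I s)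
    {w : MvPolynomial (Fin n) k} (hw : w.IsHomogeneous 1) {r d t : ℕ}
    (hr : hilb k (I ⊔ Ideal.span {w}) (r + 1) = 0) (hrd : r ≤ d)
    (hdec : hilb k I d < hilb k I (d - 1)) (hdt : d ≤ t) (hts : t ≤ s) :
    hilb k I t < hilb k I (t - 1) := by
  obtain rfl | hdt := hdt.eq_or_lt
  · exact hdec
  obtain ⟨u, rfl⟩ : ∃ u, t = u + 1 := ⟨t - 1, by omega⟩
  by_contra! hle
  rw [Nat.add_sub_cancel] at hle
  have hsurj := mulPart_surjective hI hw (hilb_eq_zero_of_le hr (by omega : r + 1 ≤ u + 1))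
  have hinj := mulPart_injective_of_surjective hw hsurj hle
  have hinj' := hlev.mulPart_injective_of_le hw (by omega : d - 1 ≤ u) (by omega) hinj
  have hd : d - 1 + 1 = d := Nat.sub_add_cancel (Nat.pos_of_ne_zero (by rintro rfl; simp at hdec))
  have := hilb_le_hilb_succ_of_injective hw hinj'
  rw [hd] at this
  omega

theorem IsLevel.hilb_sub_hilb_succ_le (hI : IsHomogIdeal k I) (hlev : IsLevel k I s)
    {c : Fin n → k} {i₀ : Fin n} (hc : c i₀ ≠ 0) {r u : ℕ}
    (hr : hilb k (I ⊔ Ideal.span {linForm k c}) (r + 1) = 0) (hru : r ≤ u + 1) (hus : u < s) :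
    (hilb k I u : ℤ) - hilb k I (u + 1) ≤
      ((n : ℤ) - 1) * (hilb k I (u + 1) - hilb k I (u + 1 + 1)) := by
  have hL := isHomogeneous_linForm c
  have hdrop := hilb_le_hilb_succ_add_finrank_ker (I := I) hL u
  have hnext := hilb_succ_add_finrank_ker_of_surjective hL
    (mulPart_surjective hI hL (hilb_eq_zero_of_le hr (by omega : r + 1 ≤ u + 1 + 1)))
  have hker : (finrank k (LinearMap.ker (mulPart I hL u)) : ℤ) ≤
      ((n : ℤ) - 1) * finrank k (LinearMap.ker (mulPart I hL (u + 1))) := by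
    rw [← Nat.cast_pred (Fin.pos i₀)]
    exact_mod_cast hlev.finrank_ker_mulPart_le hc hus.ne
  have hnext' : (hilb k I (u + 1) : ℤ) - hilb k I (u + 1 + 1) =
      finrank k (LinearMap.ker (mulPart I hL (u + 1))) := by omega
  rw [hnext']
  omega

end HilbertFunction

section Genericity

variable {k : Type*} [Field k] {ι : Type*}

theorem generic_of_forall {P : (ι → k) → Prop} (h : ∀ c, P c) : Generic k P :=
  ⟨1, one_ne_zero, fun c _ => h c⟩

theorem generic_ne_zero (i : ι) : Generic k fun c : ι → k => c i ≠ 0 :=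
  ⟨X i, X_ne_zero i, fun c hc => by simpa using hc⟩

theorem Generic.and {P Q : (ι → k) → Prop} (hP : Generic k P) (hQ : Generic k Q) :
    Generic k fun c => P c ∧ Q c := by
  obtain ⟨p, hp, hP⟩ := hP
  obtain ⟨q, hq, hQ⟩ := hQ
  refine ⟨p * q, mul_ne_zero hp hq, fun c hc => ?_⟩
  rw [map_mul] at hc
  exact ⟨hP c (left_ne_zero_of_mul hc), hQ c (right_ne_zero_of_mul hc)⟩

theorem Generic.exists [Infinite k] {P : (ι → k) → Prop} (hP : Generic k P) : ∃ c, P c := by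
  obtain ⟨p, hp, hP⟩ := hP
  obtain ⟨c, hc⟩ : ∃ c, eval c p ≠ 0 := by
    by_contra! h
    exact hp (MvPolynomial.funext fun c => by simp [h c])
  exact ⟨c, hP c hc⟩

theorem generic_hilb_sup_linForm_redNum {n : ℕ} {I : Ideal (MvPolynomial (Fin n) k)} {s : ℕ}
    (hs : hilb k I (s + 1) = 0) :
    Generic k fun c : Fin n → k => hilb k (I ⊔ Ideal.span {linForm k c}) (redNum k I + 1) = 0 :=
  Nat.sInf_mem (s := {ℓ | Generic k fun c : Fin n → k =>
      hilb k (I ⊔ Ideal.span {linForm k c}) (ℓ + 1) = 0}) ⟨s, generic_of_forall fun _ =>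
    hilb_eq_zero_iff.mpr <|
      (hilb_eq_zero_iff.mp hs).trans (Submodule.restrictScalars_mono k le_sup_left)⟩

end Genericity

/-- For a graded Artinian level algebra `A = R/I` with h-vector
`(h_0,…,h_s)`, if `h_{d-1} > h_d` for some `d ≥ r₁(A)`, then
(a) `h_{d-1} > h_d > ⋯ > h_s > 0`, and
(b) `h_{t-1} − h_t ≤ (n−1)(h_t − h_{t+1})` for all `d ≤ t ≤ s`. -/
theorem stmt_2 {k : Type*} [Field k] [CharZero k] {n : ℕ}
    (I : Ideal (MvPolynomial (Fin n) k)) (hI : IsHomogIdeal k I)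
    (h : ℕ → ℕ) (hh : ∀ t, hilb k I t = h t)
    (s : ℕ) (hs : h s ≠ 0) (hart : ∀ t, s < t → h t = 0)
    (hlev : IsLevel k I s)
    (d : ℕ) (hd : redNum k I ≤ d) (hdec : h d < h (d - 1)) :
    ((∀ t : ℕ, d ≤ t → t ≤ s → h t < h (t - 1)) ∧ 0 < h s) ∧
    (∀ t : ℕ, d ≤ t → t ≤ s →
      (h (t - 1) : ℤ) - h t ≤ ((n : ℤ) - 1) * ((h t : ℤ) - h (t + 1))) := by
  obtain rfl : hilb k I = h := funext hh
  have : Infinite k := CharZero.infinite k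
  have hgen := generic_hilb_sup_linForm_redNum (hart (s + 1) s.lt_succ_self)
  refine ⟨⟨fun t hdt hts => ?_, Nat.pos_of_ne_zero hs⟩, fun t hdt hts => ?_⟩
  · obtain ⟨c, hc⟩ := hgen.exists
    exact hlev.hilb_lt_hilb_pred hI (isHomogeneous_linForm c) hc hd hdec hdt hts
  · have hd₀ : d ≠ 0 := by rintro rfl; simp at hdec
    obtain ⟨u, rfl⟩ : ∃ u, t = u + 1 := ⟨t - 1, by omega⟩
    have hn : 0 < n := pos_of_hilb_ne_zero (by omega : 0 < s) hs
    obtain ⟨c, hc, hc₀⟩ := (hgen.and (generic_ne_zero (⟨0, hn⟩ : Fin n))).exists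
    exact hlev.hilb_sub_hilb_succ_le hI hc₀ hc (by omega) (by omega)
end

section
/- Let R = k[x_1,x_2,x_3] and let A = R/I be a graded Artinian algebra with h-vector (1, 3, h_2, …, h_s). If h_{d−1} − h_d = 2(h_d − h_{d+1}) > 0 for some d with r_1(A) < d < s, then A is not level. -/
open MvPolynomial Module Submodule

/-! Since `r₁(A) < d`, a general linear form `L` makes multiplication `A_{d-1} → A_d → A_{d+1}`
surjective, so `dim (0 :_A L)_{d-1} = h_{d-1} - h_d = 2 · dim (0 :_A L)_d > 0`. Completing `L` to a
basis `L, u, v` of `R_1`, the map `x ↦ (u x, v x)` sends `(0 :_A L)_{d-1}` to two copies of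
`(0 :_A L)_d`, spaces of equal dimension. A nonzero kernel element is a socle element of degree
`d - 1`. Otherwise the map is onto, and any nonzero `y ∈ (0 :_A L)_d` is the image of some `x₁`
under `u` with `v x₁ = 0` and of some `x₂` under `v` with `u x₂ = 0`; then `v y = u v x₁ = 0` and
`u y = v u x₂ = 0`, so `y` is a socle element of degree `d < s`. -/

theorem LinearMap.exists_ne_zero_of_finrank_ker_eq_two_mul {k M₀ M₁ M₂ : Type*} [Field k]
    [AddCommGroup M₀] [Module k M₀] [AddCommGroup M₁] [Module k M₁] [AddCommGroup M₂]
    [Module k M₂] [FiniteDimensional k M₀] [FiniteDimensional k M₁]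
    (l₀ u₀ v₀ : M₀ →ₗ[k] M₁) (l₁ u₁ v₁ : M₁ →ₗ[k] M₂)
    (hlu : l₁ ∘ₗ u₀ = u₁ ∘ₗ l₀) (hlv : l₁ ∘ₗ v₀ = v₁ ∘ₗ l₀) (huv : v₁ ∘ₗ u₀ = u₁ ∘ₗ v₀)
    (hdim : finrank k (ker l₀) = 2 * finrank k (ker l₁)) (hpos : 0 < finrank k (ker l₁)) :
    (∃ x ≠ 0, l₀ x = 0 ∧ u₀ x = 0 ∧ v₀ x = 0) ∨ (∃ y ≠ 0, l₁ y = 0 ∧ u₁ y = 0 ∧ v₁ y = 0) := by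
  have maps_ker {w₀ : M₀ →ₗ[k] M₁} {w₁ : M₁ →ₗ[k] M₂} (hw : l₁ ∘ₗ w₀ = w₁ ∘ₗ l₀) :
      ∀ x ∈ ker l₀, w₀ x ∈ ker l₁ := fun x hx => by
    rw [mem_ker] at hx ⊢
    rw [← LinearMap.comp_apply, hw, LinearMap.comp_apply, hx, map_zero]
  let ψ : ker l₀ →ₗ[k] ker l₁ × ker l₁ :=
    (u₀.restrict (maps_ker hlu)).prod (v₀.restrict (maps_ker hlv))
  have hψ {x : ker l₀} {y z : ker l₁} (h : ψ x = (y, z)) : u₀ x = y ∧ v₀ x = z :=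
    ⟨congrArg (fun p => (p.1 : M₁)) h, congrArg (fun p => (p.2 : M₁)) h⟩
  by_cases hinj : Function.Injective ψ
  · right
    have hsurj : Function.Surjective ψ :=
      (LinearMap.injective_iff_surjective_of_finrank_eq_finrank
        (by rw [Module.finrank_prod, hdim, two_mul])).mp hinj
    obtain ⟨y, hy⟩ := Module.finrank_pos_iff_exists_ne_zero.mp hpos
    obtain ⟨x₁, hx₁⟩ := hsurj (y, 0)
    obtain ⟨x₂, hx₂⟩ := hsurj (0, y)
    obtain ⟨hux₁, hvx₁⟩ := hψ hx₁
    obtain ⟨hux₂, hvx₂⟩ := hψ hx₂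
    refine ⟨y, by simpa using hy, y.2, ?_, ?_⟩
    · rw [← hvx₂, ← LinearMap.comp_apply, ← huv, LinearMap.comp_apply, hux₂,
        ZeroMemClass.coe_zero, map_zero]
    · rw [← hux₁, ← LinearMap.comp_apply, huv, LinearMap.comp_apply, hvx₁,
        ZeroMemClass.coe_zero, map_zero]
  · left
    obtain ⟨x, hx, hx0⟩ : ∃ x, ψ x = 0 ∧ x ≠ 0 := by
      simpa [← LinearMap.ker_eq_bot, Submodule.eq_bot_iff] using hinj
    obtain ⟨hux, hvx⟩ := hψ hx
    exact ⟨x, by simpa using hx0, x.2, hux, hvx⟩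

theorem homogeneousComponent_mul_of_isHomogeneous_right {σ R : Type*} [CommSemiring R]
    (a : MvPolynomial σ R) {b : MvPolynomial σ R} {i : ℕ} (hb : b.IsHomogeneous i) (t : ℕ) :
    homogeneousComponent (t + i) (a * b) = homogeneousComponent t a * b := by
  let := MvPolynomial.gradedAlgebra (σ := σ) (R := R)
  have h := DirectSum.coe_decompose_mul_of_right_mem_of_le (homogeneousSubmodule σ R)
    (a := a) (n := t + i) hb (Nat.le_add_left i t)
  rw [Nat.add_sub_cancel] at h
  simpa only [DirectSum.decompose, decomposition, Equiv.coe_fn_mk,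
    decomposition.decompose'_apply] using h

noncomputable section GradedPieces

variable {k : Type*} [Field k] {n : ℕ}

local notation "V" => homogeneousSubmodule (Fin n) k

instance (t : ℕ) : FiniteDimensional k (V t) :=
  Module.Finite.iff_fg.mpr (homogeneousSubmodule_fg _ _ t)

theorem homogeneousSubmodule_succ_le {J : Ideal (MvPolynomial (Fin n) k)} {t : ℕ}
    (h : V t ≤ J.restrictScalars k) : V (t + 1) ≤ J.restrictScalars k := by
  rw [← homogeneousSubmodule_one_pow, pow_succ, homogeneousSubmodule_one_pow]
  exact Submodule.mul_le.mpr fun f hf g _ => J.mul_mem_right g (h hf)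

theorem hilb_eq_zero_iff_s11 (J : Ideal (MvPolynomial (Fin n) k)) (t : ℕ) :
    hilb k J t = 0 ↔ V t ≤ J.restrictScalars k := by
  rw [hilb, idim, Nat.sub_eq_zero_iff_le]
  constructor
  · exact fun h => inf_eq_right.mp (Submodule.eq_of_le_of_finrank_le inf_le_right h)
  · exact fun h => (inf_eq_right.mpr h).symm ▸ le_rfl

theorem hilb_eq_zero_of_le_s11 {J : Ideal (MvPolynomial (Fin n) k)} {a b : ℕ}
    (ha : hilb k J a = 0) (hab : a ≤ b) : hilb k J b = 0 := by
  induction b, hab using Nat.le_induction with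
  | base => exact ha
  | succ b _ ih =>
    exact (hilb_eq_zero_iff_s11 J _).mpr (homogeneousSubmodule_succ_le ((hilb_eq_zero_iff_s11 J b).mp ih))

theorem hilb_eq_zero_of_ideal_le {I J : Ideal (MvPolynomial (Fin n) k)} (hIJ : I ≤ J) {t : ℕ}
    (h : hilb k I t = 0) : hilb k J t = 0 :=
  (hilb_eq_zero_iff_s11 J t).mpr (((hilb_eq_zero_iff_s11 I t).mp h).trans hIJ)

theorem exists_hilb_sup_linForm_eq_zero [Infinite k] (I : Ideal (MvPolynomial (Fin n) k))
    (hI : ∃ ℓ, hilb k I (ℓ + 1) = 0) :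
    ∃ c : Fin n → k, ∀ t, redNum k I ≤ t →
      hilb k (I ⊔ Ideal.span {linForm k c}) (t + 1) = 0 := by
  obtain ⟨ℓ, hℓ⟩ := hI
  have hne : ℓ ∈ {ℓ : ℕ | Generic k fun c : Fin n → k =>
      hilb k (I ⊔ Ideal.span {linForm k c}) (ℓ + 1) = 0} :=
    ⟨1, one_ne_zero, fun c _ => hilb_eq_zero_of_ideal_le le_sup_left hℓ⟩
  obtain ⟨p, hp, hpc⟩ := Nat.sInf_mem ⟨ℓ, hne⟩
  obtain ⟨c, hc⟩ : ∃ c, eval c p ≠ 0 := by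
    by_contra! hzero
    exact hp (MvPolynomial.funext fun c => by simpa using hzero c)
  exact ⟨c, fun t ht => hilb_eq_zero_of_le_s11 (hpc c hc) (by rw [redNum] at ht; omega)⟩

theorem linForm_mem_homogeneousSubmodule (c : Fin n → k) : linForm k c ∈ V 1 :=
  Submodule.sum_mem _ fun i _ => isHomogeneous_C_mul_X (c i) i

theorem X_mem_span_insert_linForm {c : Fin n → k} {j : Fin n} (hj : c j ≠ 0) (i : Fin n) :
    X i ∈ span k (insert (linForm k c) (X '' {j}ᶜ)) := by
  have hX {i : Fin n} (hi : i ≠ j) : X i ∈ span k (insert (linForm k c) (X '' {j}ᶜ)) :=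
    subset_span (Set.mem_insert_of_mem _ ⟨i, hi, rfl⟩)
  obtain rfl | hi := eq_or_ne i j
  · have hsplit : linForm k c = c i • X i + ∑ l ∈ Finset.univ.erase i, c l • X l := by
      simp only [linForm, smul_eq_C_mul]
      exact (Finset.add_sum_erase _ _ (Finset.mem_univ i)).symm
    have hXi : X i = (c i)⁻¹ • (linForm k c - ∑ l ∈ Finset.univ.erase i, c l • X l) := by
      rw [hsplit, add_sub_cancel_right, smul_smul, inv_mul_cancel₀ hj, one_smul]
    rw [hXi]
    exact smul_mem _ _ (sub_mem (subset_span (Set.mem_insert _ _))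
      (sum_mem fun l hl => smul_mem _ _ (hX (Finset.ne_of_mem_erase hl))))
  · exact hX hi

theorem mem_of_isLevel {I : Ideal (MvPolynomial (Fin n) k)} {s t : ℕ} (hlev : IsLevel k I s)
    (ht : t ≠ s) {G : Set (MvPolynomial (Fin n) k)} (hG : ∀ i, X i ∈ span k G)
    {f : MvPolynomial (Fin n) k} (hf : f ∈ V t) (hGf : ∀ g ∈ G, g * f ∈ I) : f ∈ I := by
  refine hlev t ht f (mem_inf.mpr ⟨hf, mem_iInf _ |>.mpr fun i => ?_⟩)
  have hspan : span k G ≤ (I.restrictScalars k).comap (LinearMap.mulRight k f) :=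
    span_le.mpr hGf
  exact hspan (hG i)

def idealPiece (I : Ideal (MvPolynomial (Fin n) k)) (t : ℕ) : Submodule k (V t) :=
  (I.restrictScalars k).comap (V t).subtype

abbrev QuotPiece (I : Ideal (MvPolynomial (Fin n) k)) (t : ℕ) : Type _ := V t ⧸ idealPiece I t

theorem finrank_quotPiece (I : Ideal (MvPolynomial (Fin n) k)) (t : ℕ) :
    finrank k (QuotPiece I t) = hilb k I t := by
  have hpiece : finrank k (idealPiece I t) = idim k I t := by
    have h : idealPiece I t = (I.restrictScalars k ⊓ V t).comap (V t).subtype := by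
      ext f
      simp [idealPiece]
    rw [idim, h, (Submodule.comapSubtypeEquivOfLe inf_le_right).finrank_eq]
  rw [hilb, ← hpiece, ← Submodule.finrank_quotient_add_finrank (idealPiece I t),
    Nat.add_sub_cancel]

def mulPiece (I : Ideal (MvPolynomial (Fin n) k)) {w : MvPolynomial (Fin n) k} (hw : w ∈ V 1)
    (t : ℕ) : QuotPiece I t →ₗ[k] QuotPiece I (t + 1) :=
  mapQ _ _ ((LinearMap.mulRight k w).restrict fun f hf => show f * w ∈ V (t + 1) from hf.mul hw)
    fun _ hf => I.mul_mem_right w hf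

variable {I : Ideal (MvPolynomial (Fin n) k)} {w w' : MvPolynomial (Fin n) k}

theorem mulPiece_mk_eq_zero_iff (hw : w ∈ V 1) {t : ℕ} (f : V t) :
    mulPiece I hw t (Submodule.Quotient.mk f) = 0 ↔ (f : MvPolynomial (Fin n) k) * w ∈ I :=
  Submodule.Quotient.mk_eq_zero _

theorem mulPiece_comp_comm (hw : w ∈ V 1) (hw' : w' ∈ V 1) (t : ℕ) :
    mulPiece I hw' (t + 1) ∘ₗ mulPiece I hw t = mulPiece I hw (t + 1) ∘ₗ mulPiece I hw' t := by
  ext f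
  exact congrArg Submodule.Quotient.mk (Subtype.ext (mul_right_comm _ _ _))

theorem mulPiece_surjective (hI : IsHomogIdeal k I) (hw : w ∈ V 1) {t : ℕ}
    (hsat : hilb k (I ⊔ Ideal.span {w}) (t + 1) = 0) : Function.Surjective (mulPiece I hw t) := by
  rintro y
  obtain ⟨⟨f, hf⟩, rfl⟩ := Submodule.Quotient.mk_surjective _ y
  obtain ⟨a, ha, b, hb, rfl⟩ := mem_sup.mp ((hilb_eq_zero_iff_s11 _ _).mp hsat hf)
  obtain ⟨g, rfl⟩ := Ideal.mem_span_singleton'.mp hb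
  refine ⟨Submodule.Quotient.mk ⟨homogeneousComponent t g, homogeneousComponent_mem t g⟩,
    (Submodule.Quotient.eq _).mpr ?_⟩
  have hcomp : homogeneousComponent (t + 1) (a + g * w) = a + g * w :=
    homogeneousComponent_of_mem hf |>.trans (if_pos rfl)
  rw [map_add, homogeneousComponent_mul_of_isHomogeneous_right g hw] at hcomp
  change homogeneousComponent t g * w - (a + g * w) ∈ I
  rw [← hcomp, sub_add_cancel_right]
  exact neg_mem (hI a ha (t + 1))

theorem finrank_ker_mulPiece_add (hw : w ∈ V 1) {t : ℕ}
    (hsurj : Function.Surjective (mulPiece I hw t)) :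
    finrank k (LinearMap.ker (mulPiece I hw t)) + hilb k I (t + 1) = hilb k I t := by
  rw [← finrank_quotPiece, ← finrank_quotPiece, ← LinearMap.finrank_range_add_finrank_ker
    (mulPiece I hw t), LinearMap.range_eq_top.mpr hsurj, finrank_top, add_comm]

theorem eq_zero_of_isLevel {s t : ℕ} (hlev : IsLevel k I s) (ht : t ≠ s) {c : Fin n → k}
    {j : Fin n} (hj : c j ≠ 0) {x : QuotPiece I t}
    (hL : mulPiece I (linForm_mem_homogeneousSubmodule c) t x = 0)
    (hX : ∀ i ≠ j, mulPiece I (isHomogeneous_X k i) t x = 0) : x = 0 := by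
  obtain ⟨f, rfl⟩ := Submodule.Quotient.mk_surjective _ x
  refine (Submodule.Quotient.mk_eq_zero _).mpr
    (mem_of_isLevel hlev ht (X_mem_span_insert_linForm hj) f.2 ?_)
  rintro g (rfl | ⟨i, hi, rfl⟩)
  · rw [mul_comm]
    exact (mulPiece_mk_eq_zero_iff _ f).mp hL
  · rw [mul_comm]
    exact (mulPiece_mk_eq_zero_iff _ f).mp (hX i hi)

end GradedPieces

theorem stmt_11_general {k : Type*} [Field k] [CharZero k]
    (I : Ideal (MvPolynomial (Fin 3) k)) (hI : IsHomogIdeal k I)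
    (h : ℕ → ℕ) (hh : ∀ t, hilb k I t = h t)
    (s : ℕ) (hart : ∀ t, s < t → h t = 0)
    (d : ℕ) (hd1 : redNum k I < d) (hd2 : d < s)
    (heq : (h (d - 1) : ℤ) - h d = 2 * ((h d : ℤ) - h (d + 1)))
    (hpos : 0 < (h d : ℤ) - h (d + 1)) :
    ¬ IsLevel k I s := by
  intro hlev
  obtain ⟨e, rfl⟩ : ∃ e, d = e + 1 := ⟨d - 1, by omega⟩
  obtain ⟨c, hc⟩ := exists_hilb_sup_linForm_eq_zero I ⟨s, (hh _).trans (hart _ (by omega))⟩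
  obtain ⟨j, hj⟩ : ∃ j, c j ≠ 0 := by
    by_contra! hc0
    have hzero : h (e + 1) = 0 := by
      simpa [linForm, hc0, hh] using hc e (by omega)
    omega
  have hL := linForm_mem_homogeneousSubmodule c
  have hX (i : Fin 3) : X i ∈ homogeneousSubmodule (Fin 3) k 1 := isHomogeneous_X k i
  have hker₀ := finrank_ker_mulPiece_add hL (mulPiece_surjective hI hL (hc e (by omega)))
  have hker₁ := finrank_ker_mulPiece_add hL (mulPiece_surjective hI hL (hc (e + 1) (by omega)))
  have hother : ∀ i j : Fin 3, i ≠ j → i = j + 1 ∨ i = j + 2 := by decide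
  simp only [hh, Nat.add_sub_cancel] at hker₀ hker₁ heq
  rcases LinearMap.exists_ne_zero_of_finrank_ker_eq_two_mul
    (mulPiece I hL e) (mulPiece I (hX (j + 1)) e) (mulPiece I (hX (j + 2)) e)
    (mulPiece I hL (e + 1)) (mulPiece I (hX (j + 1)) (e + 1)) (mulPiece I (hX (j + 2)) (e + 1))
    (mulPiece_comp_comm _ _ _) (mulPiece_comp_comm _ _ _) (mulPiece_comp_comm _ _ _)
    (by omega) (by omega) with ⟨x, hx0, hxL, hxu, hxv⟩ | ⟨x, hx0, hxL, hxu, hxv⟩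
  · refine hx0 (eq_zero_of_isLevel hlev (by omega) hj hxL fun i hi => ?_)
    rcases hother i j hi with rfl | rfl <;> assumption
  · refine hx0 (eq_zero_of_isLevel hlev (by omega) hj hxL fun i hi => ?_)
    rcases hother i j hi with rfl | rfl <;> assumption

/-- Let `R = k[x₁,x₂,x₃]` and `A = R/I` graded Artinian with h-vector
`(1,3,h₂,…,h_s)`. If `h_{d-1} − h_d = 2(h_d − h_{d+1}) > 0` for some `r₁(A) < d < s`,
then `A` is not level. -/
theorem stmt_11 {k : Type*} [Field k] [CharZero k]
    (I : Ideal (MvPolynomial (Fin 3) k)) (hI : IsHomogIdeal k I)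
    (h : ℕ → ℕ) (hh : ∀ t, hilb k I t = h t)
    (h0 : h 0 = 1) (h1 : h 1 = 3)
    (s : ℕ) (hs : h s ≠ 0) (hart : ∀ t, s < t → h t = 0)
    (d : ℕ) (hd1 : redNum k I < d) (hd2 : d < s)
    (heq : (h (d - 1) : ℤ) - h d = 2 * ((h d : ℤ) - h (d + 1)))
    (hpos : 0 < (h d : ℤ) - h (d + 1)) :
    ¬ IsLevel k I s :=
  stmt_11_general I hI h hh s hart d hd1 hd2 heq hpos
end
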